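/- arXiv:2210.14436 — 2 statements merged into one kernel-verified Lean document; each statement's English description precedes it below -/
import Mathlib

section
/- Under the soundness assumptions of the top-down domain (trans_t and ⊔ sound for the concrete semantics) and the soundness assumptions of the compositional operators (γ(trans_c(⊤,s)(a)) ⊇ γ(trans_t(s)(a)), γ(comp_c(⊤,c1,c0)(a)) ⊇ γ(c1(c0(a))), γ(join_c(⊤,c0,c1)(a)) ⊇ γ(c0(a) ⊔ c1(a))), the hybrid semantics apply(sum_h(P), a) is sound for every loop-free program P: γ(apply(sum_h(P), a)) ⊇ ⟦P⟧(γ(a)). -/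
/-- Loop-free programs. -/
inductive Prog (S : Type*) where
  | stmt : S → Prog S
  | comp : Prog S → Prog S → Prog S
  | choice : Prog S → Prog S → Prog S

/-- Hybrid summaries. -/
inductive Hyb (S A : Type*) where
  | stmt : S → Hyb S A
  | sum : (A → A) → Hyb S A
  | comp : Hyb S A → Hyb S A → Hyb S A
  | choice : Hyb S A → Hyb S A → Hyb S A

/-- Applying a hybrid summary to a precondition. -/
def applyH {S A : Type*} (trans : S → A → A) (join : A → A → A) : Hyb S A → A → A
  | .stmt s => trans s
  | .sum c => c
  | .comp h0 h1 => fun a => applyH trans join h1 (applyH trans join h0 a)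
  | .choice h0 h1 => fun a => join (applyH trans join h0 a) (applyH trans join h1 a)

/-- under soundness of the top-down domain and of the compositional
operators, the hybrid semantics is sound: `γ(apply(sum_h(P), a)) ⊇ ⟦P⟧(γ(a))`. -/
theorem stmt6 {S A Ψ : Type*} [Preorder A]
    (γ : A → Set Ψ) (hγ : Monotone γ) (top : A)
    (transT : S → A → A) (join : A → A → A)
    (transC : A → S → A → A) (compC joinC : A → (A → A) → (A → A) → (A → A))
    (cSem : Prog S → Set Ψ → Set Ψ)
    (hmono : ∀ P, Monotone (cSem P))
    (hcomp : ∀ P0 P1 X, cSem (.comp P0 P1) X = cSem P1 (cSem P0 X))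
    (hchoice : ∀ P0 P1 X, cSem (.choice P0 P1) X = cSem P0 X ∪ cSem P1 X)
    (hjoinT : ∀ a0 a1 : A, γ a0 ∪ γ a1 ⊆ γ (join a0 a1))
    (hatom : ∀ s a, cSem (.stmt s) (γ a) ⊆ γ (transT s a))
    (hTc : ∀ s a, γ (transT s a) ⊆ γ (transC top s a))
    (hCc : ∀ (c0 c1 : A → A) (a : A), γ (c1 (c0 a)) ⊆ γ (compC top c1 c0 a))
    (hJc : ∀ (c0 c1 : A → A) (a : A), γ (join (c0 a) (c1 a)) ⊆ γ (joinC top c0 c1 a))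
    (sumH : Prog S → Hyb S A)
    (hsumStmt : ∀ s : S,
      sumH (.stmt s) = .sum (transC top s) ∨ sumH (.stmt s) = .stmt s)
    (hsumComp : ∀ p q : Prog S,
      (∃ c0 c1 : A → A, sumH p = .sum c0 ∧ sumH q = .sum c1 ∧
        sumH (.comp p q) = .sum (compC top c1 c0)) ∨
      sumH (.comp p q) = .comp (sumH p) (sumH q))
    (hsumChoice : ∀ p q : Prog S,
      (∃ c0 c1 : A → A, sumH p = .sum c0 ∧ sumH q = .sum c1 ∧
        sumH (.choice p q) = .sum (joinC top c0 c1)) ∨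
      sumH (.choice p q) = .choice (sumH p) (sumH q)) :
    ∀ (P : Prog S) (a : A),
      cSem P (γ a) ⊆ γ (applyH transT join (sumH P) a) := by
  intro P
  induction P with
  | stmt s =>
    intro a
    rcases hsumStmt s with h | h <;> rw [h] <;> simp only [applyH]
    · exact (hatom s a).trans (hTc s a)
    · exact hatom s a
  | comp p q ihp ihq =>
    intro a
    rcases hsumComp p q with ⟨c0, c1, hp, hq, h⟩ | h
    · rw [h, hcomp]
      simp only [applyH]
      have h1 : cSem p (γ a) ⊆ γ (c0 a) := by have := ihp a; rwa [hp] at this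
      have h2 : cSem q (γ (c0 a)) ⊆ γ (c1 (c0 a)) := by
        have := ihq (c0 a); rwa [hq] at this
      exact ((hmono q h1).trans h2).trans (hCc c0 c1 a)
    · rw [h, hcomp]
      simp only [applyH]
      exact (hmono q (ihp a)).trans (ihq _)
  | choice p q ihp ihq =>
    intro a
    rcases hsumChoice p q with ⟨c0, c1, hp, hq, h⟩ | h
    · rw [h, hchoice]
      simp only [applyH]
      have h1 : cSem p (γ a) ⊆ γ (c0 a) := by have := ihp a; rwa [hp] at this
      have h2 : cSem q (γ a) ⊆ γ (c1 a) := by have := ihq a; rwa [hq] at this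
      refine Set.union_subset ?_ ?_ <;>
        [exact (h1.trans (Set.subset_union_left.trans (hjoinT _ _))).trans (hJc c0 c1 a);
         exact (h2.trans (Set.subset_union_right.trans (hjoinT _ _))).trans (hJc c0 c1 a)]
    · rw [h, hchoice]
      simp only [applyH]
      refine Set.union_subset ?_ ?_
      · exact (ihp a).trans (Set.subset_union_left.trans (hjoinT _ _))
      · exact (ihq a).trans (Set.subset_union_right.trans (hjoinT _ _))
end

section
/- In the flow-insensitive setting, suppose the predicate P_join holds globally: for all summaries c0, c1 ∈ C and all a ∈ A, (c0 ⊔_c c1)(a) = c0(a) ⊔_t c1(a); suppose also every atomic statement s in Λ(P) satisfies P_trans: trans_c(⊤,s)(a) = trans_t(s)(a) for all a, and all trans_t(s) are monotone on the complete lattice A. Then for every a ∈ A, apply((sum_c(P), ∅), a) = ⟦P⟧♯_t restricted to initial state a, i.e., lfp_a(λa'. sum_c(P)(a')) = lfp_a(λa'. ⨆_{s∈Λ(P)} trans_t(s)(a')), where sum_c(P) = ⨆_c {trans_c(⊤,s) | s ∈ Λ(P)} and lfp_a denotes the least fixed point above a. -/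
/-- The least (pre-)fixed point above `a` of `G`. -/
def lfpAbove {A : Type*} [CompleteLattice A] (a : A) (G : A → A) : A :=
  sInf {x | a ≤ x ∧ G x ≤ x}

/-- Flow-insensitive `apply((c, S), a) = lfp_a(λ a', c(a') ⊔ ⨆_{s∈S} trans_t(s)(a'))`. -/
def applyFI {A S : Type*} [CompleteLattice A]
    (transT : S → A → A) (c : A → A) (St : Set S) (a : A) : A :=
  lfpAbove a (fun a' => c a' ⊔ ⨆ s ∈ St, transT s a')

/-- if `P_join` holds globally and every statement of `Λ(P)` satisfies
`P_trans`, then `apply((sum_c(P), ∅), a)` equals the top-down flow-insensitive semantics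
started from `a`, where `sum_c(P)` is the `⊔_c`-join of `trans_c(⊤, s)` over `s ∈ Λ(P)`. -/
theorem stmt10 {A S : Type*} [CompleteLattice A]
    (transT : S → A → A) (transC : A → S → A → A) (top : A)
    (joinC : (A → A) → (A → A) → (A → A)) (botC : A → A)
    (L : List S)
    (hjoin : ∀ (c0 c1 : A → A) (a : A), joinC c0 c1 a = c0 a ⊔ c1 a)
    (hbot : ∀ a : A, botC a = ⊥)
    (htrans : ∀ s ∈ L, ∀ a : A, transC top s a = transT s a)
    (hmono : ∀ s, Monotone (transT s)) :
    ∀ a : A,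
      applyFI transT (L.foldr (fun s c => joinC (transC top s) c) botC) (∅ : Set S) a
        = lfpAbove a (fun a' => ⨆ s ∈ L, transT s a') := by
  intro a
  have hfold : ∀ a' : A,
      (L.foldr (fun s c => joinC (transC top s) c) botC) a' = ⨆ s ∈ L, transT s a' := by
    induction L with
    | nil => intro a'; simp [hbot]
    | cons s t ih =>
      intro a'
      have ih' := ih (fun s hs => htrans s (List.mem_cons_of_mem _ hs))
      simp only [List.foldr_cons, hjoin, htrans s List.mem_cons_self,
        ih', List.mem_cons, iSup_or, iSup_sup_eq]
      simp [iSup_iSup_eq_left]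
  unfold applyFI
  congr 1
  funext a'
  simp [hfold a']
end
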